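/- arXiv:2510.03734 — 4 statements merged into one kernel-verified Lean document; each statement's English description precedes it below -/
import Mathlib

section
/- Let q and ε be real numbers with 0 < q < 1/2, 0 < ε < 1, and 8qε/(1 - q) ≤ 1/2. Then the Kullback–Leibler divergence between the Bernoulli distributions with parameters q and q(1+8ε) satisfies KL(Ber(q) ‖ Ber(q(1+8ε))) = q · log(q / (q(1+8ε))) + (1 - q) · log((1 - q) / (1 - q(1+8ε))) ≤ 96 · q · ε². -/
/-! Write `a = 8ε` and `y = qa/(1-q)`, so that `1 - q(1+a) = (1-q)(1-y)`. The divergence is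
`-q log(1+a) - (1-q) log(1-y)`; the bounds `log(1+a) ≥ a - a²/2` and `-log(1-y) ≤ y + y²`
(valid for `y ≤ 1/2`) reduce it to `q a²/2 + q² a²/(1-q)`, and `q/(1-q) < 1` for `q < 1/2`. -/

namespace Real

lemma log_le_sub_inv_div_two {x : ℝ} (hx : 1 ≤ x) : log x ≤ (x - x⁻¹) / 2 := by
  have hx0 : 0 < x := by linarith
  have h := self_le_sinh_iff.mpr (log_nonneg hx)
  rwa [sinh_eq, exp_neg, exp_log hx0] at h

lemma sub_sq_div_two_le_log_one_add {x : ℝ} (hx : 0 ≤ x) : x - x ^ 2 / 2 ≤ log (1 + x) := by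
  refine le_trans ?_ (le_log_one_add_of_nonneg hx)
  rw [le_div_iff₀ (by linarith)]
  nlinarith [pow_nonneg hx 3]

lemma neg_log_one_sub_le {y : ℝ} (hy0 : 0 ≤ y) (hy : y ≤ 1 / 2) : -log (1 - y) ≤ y + y ^ 2 := by
  have hy1 : 0 < 1 - y := by linarith
  rw [← log_inv]
  refine (log_le_sub_inv_div_two (one_le_inv₀ hy1 |>.mpr (by linarith))).trans ?_
  rw [inv_inv, div_le_iff₀ two_pos, sub_le_iff_le_add, inv_le_iff_one_le_mul₀ hy1]
  nlinarith [mul_nonneg (sq_nonneg y) (by linarith : 0 ≤ 1 - 2 * y)]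

end Real

open Real in
lemma bernoulli_kl_mul_one_add_le {q a : ℝ} (hq0 : 0 < q) (hq1 : q < 1) (ha : 0 ≤ a)
    (hy : q * a / (1 - q) ≤ 1 / 2) :
    q * log (q / (q * (1 + a))) + (1 - q) * log ((1 - q) / (1 - q * (1 + a))) ≤
      q * a ^ 2 / 2 + q ^ 2 * a ^ 2 / (1 - q) := by
  have hq1' : 0 < 1 - q := by linarith
  set y := q * a / (1 - q) with hy_def
  have hy0 : 0 ≤ y := by positivity
  have hqa : q * a = (1 - q) * y := by rw [hy_def, mul_div_cancel₀ _ hq1'.ne']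
  have hfirst : q / (q * (1 + a)) = (1 + a)⁻¹ := by field_simp
  have hsecond : (1 - q) / (1 - q * (1 + a)) = (1 - y)⁻¹ := by
    rw [show 1 - q * (1 + a) = (1 - q) * (1 - y) by linear_combination -hqa]
    field_simp
  have hlog_one_add := mul_le_mul_of_nonneg_left (sub_sq_div_two_le_log_one_add ha) hq0.le
  have hlog_one_sub := mul_le_mul_of_nonneg_left (neg_log_one_sub_le hy0 hy) hq1'.le
  have hsq : (1 - q) * y ^ 2 = q ^ 2 * a ^ 2 / (1 - q) := by
    rw [hy_def]; field_simp
  rw [hfirst, hsecond, log_inv, log_inv]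
  linarith

theorem stmt_1_general (q ε : ℝ) (hq0 : 0 < q) (hq1 : q < 1/2) (hε0 : 0 < ε)
    (hcond : 8 * q * ε / (1 - q) ≤ 1/2) :
    q * Real.log (q / (q * (1 + 8 * ε))) +
      (1 - q) * Real.log ((1 - q) / (1 - q * (1 + 8 * ε))) ≤ 96 * q * ε ^ 2 := by
  have hq1' : 0 < 1 - q := by linarith
  have hkl := bernoulli_kl_mul_one_add_le hq0 (by linarith) (by positivity : 0 ≤ 8 * ε)
    (by rwa [← mul_assoc, mul_comm q 8])
  have hratio : q ^ 2 * (8 * ε) ^ 2 / (1 - q) ≤ 64 * q * ε ^ 2 := by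
    rw [div_le_iff₀ hq1']
    nlinarith [mul_pos hq0 (pow_pos hε0 2)]
  linarith

theorem stmt_1 (q ε : ℝ) (hq0 : 0 < q) (hq1 : q < 1/2) (hε0 : 0 < ε) (hε1 : ε < 1)
    (hcond : 8 * q * ε / (1 - q) ≤ 1/2) :
    q * Real.log (q / (q * (1 + 8 * ε))) +
      (1 - q) * Real.log ((1 - q) / (1 - q * (1 + 8 * ε))) ≤ 96 * q * ε ^ 2 :=
  stmt_1_general q ε hq0 hq1 hε0 hcond
end

section
/- Let q and ε be real numbers with 0 < q < 1/2, 0 < ε < 1, and 8qε/(1 - q) < 1. Then the Kullback–Leibler divergence between the Bernoulli distributions with parameters q(1+8ε) and q satisfies KL(Ber(q(1+8ε)) ‖ Ber(q)) = q(1+8ε) · log(1+8ε) + (1 - q(1+8ε)) · log((1 - q(1+8ε)) / (1 - q)) ≤ 128 · q · ε². -/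
theorem stmt_2 (q ε : ℝ) (hq0 : 0 < q) (hq1 : q < 1/2) (hε0 : 0 < ε) (hε1 : ε < 1)
    (hcond : 8 * q * ε / (1 - q) < 1) :
    q * (1 + 8 * ε) * Real.log (1 + 8 * ε) +
      (1 - q * (1 + 8 * ε)) * Real.log ((1 - q * (1 + 8 * ε)) / (1 - q)) ≤
      128 * q * ε ^ 2 := by
  have h1q : (0:ℝ) < 1 - q := by linarith
  have hlt : 8 * q * ε < 1 - q := (div_lt_one h1q).mp hcond
  have hp1 : q * (1 + 8 * ε) < 1 := by nlinarith
  have hp0 : 0 < q * (1 + 8 * ε) := by nlinarith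
  have hA : Real.log (1 + 8 * ε) ≤ 8 * ε := by
    have := Real.log_le_sub_one_of_pos (show (0:ℝ) < 1 + 8 * ε by linarith)
    linarith
  have hB : Real.log ((1 - q * (1 + 8 * ε)) / (1 - q)) ≤
      (1 - q * (1 + 8 * ε)) / (1 - q) - 1 :=
    Real.log_le_sub_one_of_pos (div_pos (by linarith) h1q)
  have h2 : (1 - q * (1 + 8 * ε)) / (1 - q) - 1 = -(8 * q * ε) / (1 - q) := by
    field_simp
    ring
  rw [h2] at hB
  have h3 : q * (1 + 8 * ε) * (8 * ε) +
      (1 - q * (1 + 8 * ε)) * (-(8 * q * ε) / (1 - q)) = 64 * q * ε ^ 2 / (1 - q) := by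
    field_simp
    ring
  have h4 : 64 * q * ε ^ 2 / (1 - q) ≤ 128 * q * ε ^ 2 := by
    rw [div_le_iff₀ h1q]
    nlinarith [mul_pos hq0 (pow_pos hε0 2)]
  nlinarith [mul_le_mul_of_nonneg_left hA (le_of_lt hp0),
    mul_le_mul_of_nonneg_left hB (by linarith : (0:ℝ) ≤ 1 - q * (1 + 8 * ε))]
end

section
/- For every nonnegative integer τ and every real number ε with 0 ≤ ε ≤ 1, one has (1 - ε)^τ · exp(ετ) + (1 + ε)^τ · exp(-ετ) ≤ 2 · exp(-τε²/4). -/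
open Real

-- plus side: (1+ε) ≤ exp(ε - ε²/4)
lemma aux_plus (ε : ℝ) (h0 : 0 ≤ ε) (h1 : ε ≤ 1) :
    (1 + ε) * Real.exp (-ε) ≤ Real.exp (-(ε ^ 2 / 4)) := by
  have hx : (0:ℝ) ≤ ε - ε ^ 2 / 4 := by nlinarith
  have h := Real.quadratic_le_exp_of_nonneg hx
  have key : 1 + ε ≤ Real.exp (ε - ε ^ 2 / 4) := by nlinarith
  calc (1 + ε) * Real.exp (-ε) ≤ Real.exp (ε - ε ^ 2 / 4) * Real.exp (-ε) := by
        exact mul_le_mul_of_nonneg_right key (Real.exp_nonneg _)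
    _ = Real.exp (-(ε ^ 2 / 4)) := by rw [← Real.exp_add]; ring_nf

-- 1+ε ≥ exp(ε - 3ε²/4)
lemma aux_lb (ε : ℝ) (h0 : 0 ≤ ε) (h1 : ε ≤ 1) :
    Real.exp (ε - 3 * ε ^ 2 / 4) ≤ 1 + ε := by
  set x : ℝ := ε - 3 * ε ^ 2 / 4 with hxdef
  have hx0 : 0 ≤ x := by simp only [hxdef]; nlinarith
  have hhalf : 1 - x / 2 > 0 := by simp only [hxdef]; nlinarith
  have hstep : Real.exp (x / 2) ≤ 1 / (1 - x / 2) := by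
    have h2 : 1 - x / 2 ≤ Real.exp (-(x / 2)) := by
      have := Real.add_one_le_exp (-(x / 2)); linarith
    rw [le_div_iff₀ hhalf]
    calc Real.exp (x / 2) * (1 - x / 2) ≤ Real.exp (x / 2) * Real.exp (-(x / 2)) :=
          mul_le_mul_of_nonneg_left h2 (Real.exp_nonneg _)
      _ = 1 := by rw [← Real.exp_add]; simp
  have hsq : Real.exp x = Real.exp (x / 2) ^ 2 := by
    rw [sq, ← Real.exp_add]; congr 1; ring
  have h3 : Real.exp x ≤ (1 / (1 - x / 2)) ^ 2 := by
    rw [hsq]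
    exact pow_le_pow_left₀ (Real.exp_nonneg _) hstep 2
  have h4 : (1 / (1 - x / 2)) ^ 2 ≤ 1 + ε := by
    rw [div_pow, one_pow, div_le_iff₀ (by positivity)]
    have h3e : 0 ≤ ε ^ 3 := by positivity
    have h5e : 0 ≤ ε ^ 5 := by positivity
    have h43 : ε ^ 4 ≤ ε ^ 3 := pow_le_pow_of_le_one h0 h1 (by norm_num)
    simp only [hxdef]; nlinarith
  linarith

-- minus side
lemma aux_minus (ε : ℝ) (h0 : 0 ≤ ε) (h1 : ε ≤ 1) :
    (1 - ε) * Real.exp ε ≤ Real.exp (-(ε ^ 2 / 4)) := by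
  have hlb := aux_lb ε h0 h1
  have hsq : 1 - ε ^ 2 ≤ Real.exp (-(ε ^ 2)) := by
    have := Real.add_one_le_exp (-(ε ^ 2)); linarith
  have hpos : 0 < Real.exp (ε - 3 * ε ^ 2 / 4) := Real.exp_pos _
  have key : (1 - ε) * Real.exp ε * Real.exp (ε - 3 * ε ^ 2 / 4)
      ≤ Real.exp (-(ε ^ 2)) * Real.exp ε := by
    have h1e : (1 - ε) * Real.exp ε * Real.exp (ε - 3 * ε ^ 2 / 4)
        ≤ (1 - ε) * Real.exp ε * (1 + ε) := by
      exact mul_le_mul_of_nonneg_left hlb (mul_nonneg (by linarith) (Real.exp_nonneg ε))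
    have h2e : (1 - ε) * Real.exp ε * (1 + ε) = (1 - ε ^ 2) * Real.exp ε := by ring
    have h3e : (1 - ε ^ 2) * Real.exp ε ≤ Real.exp (-(ε ^ 2)) * Real.exp ε :=
      mul_le_mul_of_nonneg_right hsq (Real.exp_nonneg _)
    linarith
  have final : (1 - ε) * Real.exp ε ≤ Real.exp (-(ε ^ 2)) * Real.exp ε / Real.exp (ε - 3 * ε ^ 2 / 4) := by
    rw [le_div_iff₀ hpos]; exact key
  calc (1 - ε) * Real.exp ε ≤ Real.exp (-(ε ^ 2)) * Real.exp ε / Real.exp (ε - 3 * ε ^ 2 / 4) := final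
    _ = Real.exp (-(ε ^ 2 / 4)) := by
        rw [← Real.exp_add, ← Real.exp_sub]
        congr 1; ring

theorem stmt_6 (τ : ℕ) (ε : ℝ) (h0 : 0 ≤ ε) (h1 : ε ≤ 1) :
    (1 - ε) ^ τ * Real.exp (ε * τ) + (1 + ε) ^ τ * Real.exp (-(ε * τ)) ≤
      2 * Real.exp (-((τ : ℝ) * ε ^ 2 / 4)) := by
  have hm : ((1 - ε) * Real.exp ε) ^ τ ≤ Real.exp (-(ε ^ 2 / 4)) ^ τ :=
    pow_le_pow_left₀ (mul_nonneg (by linarith) (Real.exp_nonneg ε)) (aux_minus ε h0 h1) τ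
  have hp : ((1 + ε) * Real.exp (-ε)) ^ τ ≤ Real.exp (-(ε ^ 2 / 4)) ^ τ :=
    pow_le_pow_left₀ (by positivity) (aux_plus ε h0 h1) τ
  have e1 : ((1 - ε) * Real.exp ε) ^ τ = (1 - ε) ^ τ * Real.exp (ε * τ) := by
    rw [mul_pow, ← Real.exp_nat_mul]; ring_nf
  have e2 : ((1 + ε) * Real.exp (-ε)) ^ τ = (1 + ε) ^ τ * Real.exp (-(ε * τ)) := by
    rw [mul_pow, ← Real.exp_nat_mul]; ring_nf
  have e3 : Real.exp (-(ε ^ 2 / 4)) ^ τ = Real.exp (-((τ : ℝ) * ε ^ 2 / 4)) := by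
    rw [← Real.exp_nat_mul]; ring_nf
  rw [← e1, ← e2, ← e3]
  linarith
end

section
/- Let ν be a σ-finite measure on a measurable space 𝒳, let h : 𝒳 → [0, ∞) and T : 𝒳 → ℝ^d be measurable, let W : ℝ^d → ℝ be twice continuously differentiable, and for θ ∈ ℝ^d write E_θ(x) := h(x)·exp(⟨θ, T(x)⟩ - W(θ)). Let Θ ⊆ ℝ^d be a convex set such that for every θ ∈ Θ one has ∫ E_θ dν = 1, and let P_θ denote the probability measure with density E_θ with respect to ν. Let θ* ∈ Θ and β > 0 be such that the open Euclidean ball B(θ*, 1/β) is contained in Θ, suppose ∇W(θ*) = ∫ T(x) dP_{θ*}(x) =: μ, and suppose ⟨v, ∇²W(θ) v⟩ ≤ λ‖v‖² for every θ ∈ Θ and v ∈ ℝ^d, where λ > 0. Then for every u ∈ ℝ^d with ‖u‖ < 1/β, ∫ exp(⟨u, T(x) - μ⟩) dP_{θ*}(x) ≤ exp(λ‖u‖²/2). -/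
/-!
Because `θs + u ∈ Θ`, the densities satisfy `E_θs · exp ⟪u, T⟫ = exp (W (θs + u) - W θs) · E_(θs+u)`,
so the centred moment generating function equals `exp (W (θs + u) - W θs - ⟪u, μ⟫)`. Since
`μ = ∇W θs`, this exponent is the second-order Taylor remainder of `W` along the segment
`[θs, θs + u] ⊆ Θ`, which the Hessian bound controls by `λ ‖u‖² / 2`.
-/

open MeasureTheory Set

lemma sub_le_sub_of_hasDerivAt_le {f g f' g' : ℝ → ℝ} {a b : ℝ} (hab : a ≤ b)
    (hf : ∀ t, HasDerivAt f (f' t) t) (hg : ∀ t, HasDerivAt g (g' t) t)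
    (hle : ∀ t ∈ Ioo a b, f' t ≤ g' t) :
    f b - f a ≤ g b - g a := by
  have hmono : MonotoneOn (fun t => g t - f t) (Icc a b) := by
    refine monotoneOn_of_hasDerivWithinAt_nonneg (convex_Icc a b)
      (fun t _ => ((hg t).sub (hf t)).continuousAt.continuousWithinAt)
      (fun t _ => ((hg t).sub (hf t)).hasDerivWithinAt) fun t ht => ?_
    rw [interior_Icc] at ht
    exact sub_nonneg.2 (hle t ht)
  have := hmono (left_mem_Icc.2 hab) (right_mem_Icc.2 hab) hab
  linarith

lemma sub_sub_deriv_le_of_deriv2_le {φ φ' φ'' : ℝ → ℝ} {C : ℝ}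
    (hφ : ∀ t, HasDerivAt φ (φ' t) t) (hφ' : ∀ t, HasDerivAt φ' (φ'' t) t)
    (hC : ∀ t ∈ Icc (0 : ℝ) 1, φ'' t ≤ C) :
    φ 1 - φ 0 - φ' 0 ≤ C / 2 := by
  have hslope : ∀ t ∈ Icc (0 : ℝ) 1, φ' t - φ' 0 ≤ C * t := fun t ht => by
    simpa using sub_le_sub_of_hasDerivAt_le ht.1 hφ' (fun s => (hasDerivAt_id s).const_mul C)
      fun s hs => by simpa using hC s ⟨hs.1.le, hs.2.le.trans ht.2⟩
  have hquad : ∀ t, HasDerivAt (fun s => φ' 0 * s + C * s ^ 2 / 2) (φ' 0 + C * t) t := by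
    intro t
    refine (((hasDerivAt_id' t).const_mul (φ' 0)).add
      (((hasDerivAt_pow 2 t).const_mul C).div_const 2)).congr_deriv ?_
    norm_num
    ring
  have := sub_le_sub_of_hasDerivAt_le zero_le_one hφ hquad
    fun t ht => by linarith [hslope t ⟨ht.1.le, ht.2.le⟩]
  norm_num at this
  linarith

lemma sub_sub_fderiv_le_of_iteratedFDeriv_two_le {E : Type*} [NormedAddCommGroup E]
    [NormedSpace ℝ E] {W : E → ℝ} (hW : ContDiff ℝ 2 W) (a u : E) {C : ℝ}
    (hC : ∀ t ∈ Icc (0 : ℝ) 1, iteratedFDeriv ℝ 2 W (a + t • u) ![u, u] ≤ C) :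
    W (a + u) - W a - fderiv ℝ W a u ≤ C / 2 := by
  have hline : ∀ t : ℝ, HasDerivAt (fun s : ℝ => a + s • u) u t := fun t => by
    simpa using ((hasDerivAt_id t).smul_const u).const_add a
  have hW' : Differentiable ℝ (fderiv ℝ W) :=
    (hW.fderiv_right (m := 1) le_rfl).differentiable one_ne_zero
  have hφ : ∀ t, HasDerivAt (fun s : ℝ => W (a + s • u)) (fderiv ℝ W (a + t • u) u) t :=
    fun t => ((hW.differentiable two_ne_zero) _).hasFDerivAt.comp_hasDerivAt t (hline t)
  have hφ' : ∀ t, HasDerivAt (fun s : ℝ => fderiv ℝ W (a + s • u) u)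
      (fderiv ℝ (fderiv ℝ W) (a + t • u) u u) t := fun t =>
    ((hW' _).hasFDerivAt.comp_hasDerivAt t (hline t)).clm_apply (hasDerivAt_const t u)
      |>.congr_deriv (by simp)
  simpa using sub_sub_deriv_le_of_deriv2_le hφ hφ' fun t ht => by
    simpa [iteratedFDeriv_two_apply] using hC t ht

section ExponentialFamily

variable {𝒳 F : Type*} [NormedAddCommGroup F] [InnerProductSpace ℝ F]

noncomputable def expFamilyDensity (h : 𝒳 → ℝ) (T : 𝒳 → F) (W : F → ℝ) (θ : F) (x : 𝒳) : ℝ :=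
  h x * Real.exp (inner ℝ θ (T x) - W θ)

variable {h : 𝒳 → ℝ} {T : 𝒳 → F} {W : F → ℝ}

lemma expFamilyDensity_mul_exp_inner (θ u : F) (x : 𝒳) :
    expFamilyDensity h T W θ x * Real.exp (inner ℝ u (T x)) =
      Real.exp (W (θ + u) - W θ) * expFamilyDensity h T W (θ + u) x := by
  simp only [expFamilyDensity, inner_add_left, mul_left_comm _ (h x), mul_assoc,
    ← Real.exp_add]
  ring_nf

lemma integral_exp_inner_withDensity_expFamilyDensity [MeasurableSpace 𝒳] [MeasurableSpace F]
    [OpensMeasurableSpace F] {ν : Measure 𝒳} (hh_nonneg : ∀ x, 0 ≤ h x)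
    (hh_meas : Measurable h) (hT_meas : Measurable T) {θ u : F}
    (hnorm : ∫ x, expFamilyDensity h T W (θ + u) x ∂ν = 1) :
    ∫ x, Real.exp (inner ℝ u (T x))
        ∂ν.withDensity (fun x => ENNReal.ofReal (expFamilyDensity h T W θ x)) =
      Real.exp (W (θ + u) - W θ) := by
  have hmeas : Measurable (expFamilyDensity h T W θ) :=
    hh_meas.mul ((((innerSL ℝ θ).continuous.measurable.comp hT_meas).sub_const _).exp)
  have hnonneg (x : 𝒳) : 0 ≤ expFamilyDensity h T W θ x :=
    mul_nonneg (hh_nonneg x) (Real.exp_nonneg _)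
  change ∫ x, _ ∂ν.withDensity (fun x => ((expFamilyDensity h T W θ x).toNNReal : ENNReal)) = _
  rw [integral_withDensity_eq_integral_smul hmeas.real_toNNReal]
  simp_rw [NNReal.smul_def, Real.coe_toNNReal _ (hnonneg _), smul_eq_mul,
    expFamilyDensity_mul_exp_inner]
  rw [integral_const_mul, hnorm, mul_one]

end ExponentialFamily

theorem stmt_14_general {d : ℕ} {𝒳 : Type*} [MeasurableSpace 𝒳]
    (ν : Measure 𝒳)
    (h : 𝒳 → ℝ) (hh_nonneg : ∀ x, 0 ≤ h x) (hh_meas : Measurable h)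
    (T : 𝒳 → EuclideanSpace ℝ (Fin d)) (hT_meas : Measurable T)
    (W : EuclideanSpace ℝ (Fin d) → ℝ) (hW : ContDiff ℝ 2 W)
    (E : EuclideanSpace ℝ (Fin d) → 𝒳 → ℝ)
    (hE : ∀ θ x, E θ x = h x * Real.exp ((inner ℝ θ (T x) : ℝ) - W θ))
    (Θ : Set (EuclideanSpace ℝ (Fin d)))
    (hnorm : ∀ θ ∈ Θ, ∫ x, E θ x ∂ν = 1)
    (P : EuclideanSpace ℝ (Fin d) → Measure 𝒳)
    (hP : ∀ θ, P θ = ν.withDensity (fun x => ENNReal.ofReal (E θ x)))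
    (θs : EuclideanSpace ℝ (Fin d))
    (β : ℝ) (hball : Metric.ball θs (1 / β) ⊆ Θ)
    (μ : EuclideanSpace ℝ (Fin d))
    (hgrad : gradient W θs = μ)
    (lam : ℝ)
    (hhess : ∀ θ ∈ Θ, ∀ v : EuclideanSpace ℝ (Fin d),
      iteratedFDeriv ℝ 2 W θ ![v, v] ≤ lam * ‖v‖ ^ 2)
    (u : EuclideanSpace ℝ (Fin d)) (hu : ‖u‖ < 1 / β) :
    ∫ x, Real.exp ((inner ℝ u (T x - μ) : ℝ)) ∂(P θs) ≤ Real.exp (lam * ‖u‖ ^ 2 / 2) := by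
  obtain rfl : E = expFamilyDensity h T W := funext fun θ => funext (hE θ)
  have hseg : ∀ t ∈ Icc (0 : ℝ) 1, θs + t • u ∈ Θ := fun t ht =>
    hball <| (convex_ball θs (1 / β)).add_smul_mem
      (Metric.mem_ball_self ((norm_nonneg u).trans_lt hu)) (by simpa using hu) ht
  have hmgf := integral_exp_inner_withDensity_expFamilyDensity hh_nonneg hh_meas hT_meas
    (hnorm _ (by simpa using hseg 1 (right_mem_Icc.2 zero_le_one)))
  have htaylor := sub_sub_fderiv_le_of_iteratedFDeriv_two_le hW θs u
    fun t ht => hhess _ (hseg t ht) u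
  rw [← inner_gradient_left, hgrad, real_inner_comm] at htaylor
  calc ∫ x, Real.exp (inner ℝ u (T x - μ)) ∂P θs
      = (∫ x, Real.exp (inner ℝ u (T x)) ∂P θs) * Real.exp (-inner ℝ u μ) := by
        simp_rw [inner_sub_right, sub_eq_add_neg, Real.exp_add]
        exact integral_mul_const _ _
    _ = Real.exp (W (θs + u) - W θs - inner ℝ u μ) := by
        rw [hP, hmgf, ← Real.exp_add]
        ring_nf
    _ ≤ Real.exp (lam * ‖u‖ ^ 2 / 2) := Real.exp_le_exp.2 htaylor

theorem stmt_14 {d : ℕ} {𝒳 : Type*} [MeasurableSpace 𝒳]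
    (ν : Measure 𝒳) [SigmaFinite ν]
    (h : 𝒳 → ℝ) (hh_nonneg : ∀ x, 0 ≤ h x) (hh_meas : Measurable h)
    (T : 𝒳 → EuclideanSpace ℝ (Fin d)) (hT_meas : Measurable T)
    (W : EuclideanSpace ℝ (Fin d) → ℝ) (hW : ContDiff ℝ 2 W)
    (E : EuclideanSpace ℝ (Fin d) → 𝒳 → ℝ)
    (hE : ∀ θ x, E θ x = h x * Real.exp ((inner ℝ θ (T x) : ℝ) - W θ))
    (Θ : Set (EuclideanSpace ℝ (Fin d))) (hΘ : Convex ℝ Θ)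
    (hnorm : ∀ θ ∈ Θ, ∫ x, E θ x ∂ν = 1)
    (P : EuclideanSpace ℝ (Fin d) → Measure 𝒳)
    (hP : ∀ θ, P θ = ν.withDensity (fun x => ENNReal.ofReal (E θ x)))
    (θs : EuclideanSpace ℝ (Fin d)) (hθs : θs ∈ Θ)
    (β : ℝ) (hβ : 0 < β) (hball : Metric.ball θs (1 / β) ⊆ Θ)
    (μ : EuclideanSpace ℝ (Fin d)) (hμ : μ = ∫ x, T x ∂(P θs))
    (hgrad : gradient W θs = μ)
    (lam : ℝ) (hlam : 0 < lam)
    (hhess : ∀ θ ∈ Θ, ∀ v : EuclideanSpace ℝ (Fin d),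
      iteratedFDeriv ℝ 2 W θ ![v, v] ≤ lam * ‖v‖ ^ 2)
    (u : EuclideanSpace ℝ (Fin d)) (hu : ‖u‖ < 1 / β) :
    ∫ x, Real.exp ((inner ℝ u (T x - μ) : ℝ)) ∂(P θs) ≤ Real.exp (lam * ‖u‖ ^ 2 / 2) :=
  stmt_14_general ν h hh_nonneg hh_meas T hT_meas W hW E hE Θ hnorm P hP θs β hball μ hgrad lam
    hhess u hu
end
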